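/- (Theorem 2.1, coverage part.) For any δ ∈ (0,1), any sampling strategy (q_t), and any family of betting strategies (λ_t(m)) indexed by m ∈ [0,1], the sets C_t = {m ∈ [0,1] : W_t(m) < 1/δ} form a (1−δ)-confidence sequence for m*, i.e. P(∃ t ∈ {1,…,N} : m* ∉ C_t) ≤ δ. -/

import Mathlib

/-!
Fix `m = m*`. Given the past, the importance-weighted draw `Z_t` has conditional mean
`Σ_{i ∈ N_t} π(i) f(i) = m* − Σ_{j<t} π(I_j) f(I_j) = μ_t(m*)`, so every betting factor has
conditional mean one and `W_t(m*)` is a nonnegative martingale with `W_0 = 1`. Ville's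
(maximal) inequality bounds the probability that it ever reaches `1/δ` by `δ`, and `m* ∉ C_t`
means exactly that `W_t(m*) ≥ 1/δ`.
-/

open MeasureTheory Finset

namespace RLFA

variable {Ω : Type*}

/-- `remaining I t ω` is the set `N_t = {1,…,N} \ {I_1, …, I_{t-1}}` of indices not yet
sampled before time `t`. -/
def remaining {N : ℕ} (I : ℕ → Ω → Fin N) (t : ℕ) (ω : Ω) : Finset (Fin N) :=
  Finset.univ \ (Finset.Icc 1 (t - 1)).image fun j => I j ω

/-- The filtration `F_t = σ(I_1, …, I_t)`. -/
def filt {N : ℕ} (I : ℕ → Ω → Fin N) (t : ℕ) : MeasurableSpace Ω :=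
  ⨆ j ∈ Finset.Icc 1 t, MeasurableSpace.comap (I j) ⊤

/-- The importance-weighted observation `Z_t = f(I_t) · π(I_t) / q_t(I_t)`. -/
noncomputable def Zt {N : ℕ} (π f : Fin N → ℝ) (q : ℕ → Ω → Fin N → ℝ)
    (I : ℕ → Ω → Fin N) (t : ℕ) (ω : Ω) : ℝ :=
  f (I t ω) * (π (I t ω) / q t ω (I t ω))

/-- `μ_t(m) = m − Σ_{j=1}^{t−1} π(I_j) f(I_j)`. -/
def muT {N : ℕ} (π f : Fin N → ℝ) (I : ℕ → Ω → Fin N) (m : ℝ) (t : ℕ) (ω : Ω) : ℝ :=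
  m - ∑ j ∈ Finset.Icc 1 (t - 1), π (I j ω) * f (I j ω)

open scoped NNReal

section Martingale

variable [m0 : MeasurableSpace Ω] {μ : Measure Ω} [IsFiniteMeasure μ] {ℱ : Filtration ℕ m0}
  {X : ℕ → Ω → ℝ}

/-- Integrability comes for free: a non-integrable `X (n + 1)` has conditional expectation `0`,
which would force `∫ X n = 0`. -/
theorem martingale_min_of_condExp_succ {N : ℕ}
    (hadp : ∀ n ≤ N, StronglyMeasurable[ℱ n] (X n)) (hint₀ : Integrable (X 0) μ)
    (hint₀_ne : ∫ ω, X 0 ω ∂μ ≠ 0) (hsucc : ∀ n < N, μ[X (n + 1) | ℱ n] =ᵐ[μ] X n) :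
    Martingale (fun n => X (min n N)) ℱ μ := by
  have hint : ∀ n ≤ N, Integrable (X n) μ ∧ ∫ ω, X n ω ∂μ = ∫ ω, X 0 ω ∂μ := by
    intro n
    induction n with
    | zero => exact fun _ => ⟨hint₀, rfl⟩
    | succ n ih =>
      intro hn
      obtain ⟨-, ih_eq⟩ := ih (Nat.le_of_succ_le hn)
      have hstep := hsucc n hn
      by_cases hint_succ : Integrable (X (n + 1)) μ
      · refine ⟨hint_succ, ?_⟩
        rw [← ih_eq, ← integral_condExp (ℱ.le n), integral_congr_ae hstep]
      · rw [condExp_of_not_integrable hint_succ] at hstep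
        refine absurd ?_ hint₀_ne
        rw [← ih_eq, ← integral_congr_ae hstep, Pi.zero_def, integral_zero]
  refine martingale_nat (fun n => (hadp _ (min_le_right n N)).mono (ℱ.mono (min_le_left n N)))
    (fun n => (hint _ (min_le_right n N)).1) fun n => ?_
  rcases lt_or_ge n N with hn | hn
  · simp only [min_eq_left hn.le, min_eq_left (Nat.succ_le_of_lt hn)]
    exact (hsucc n hn).symm
  · simp only [min_eq_right hn, min_eq_right (hn.trans n.le_succ)]
    rw [condExp_of_stronglyMeasurable (ℱ.le n) ((hadp N le_rfl).mono (ℱ.mono hn))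
      (hint N le_rfl).1]

/-- Ville's inequality on a finite horizon. -/
theorem _root_.MeasureTheory.Martingale.measure_exists_le_le (hX : Martingale X ℱ μ) (n : ℕ)
    (hnonneg : 0 ≤ᵐ[μ] X n) {c : ℝ} (hc : 0 < c) :
    μ {ω | ∃ k ≤ n, c ≤ X k ω} ≤ ENNReal.ofReal ((∫ ω, X 0 ω ∂μ) / c) := by
  set S := {ω | (c.toNNReal : ℝ) ≤
    (Finset.range (n + 1)).sup' Finset.nonempty_range_add_one fun k => X⁺ k ω}
  have hmax := maximal_ineq hX.submartingale.pos (fun k ω => posPart_nonneg (X k ω))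
    (ε := c.toNNReal) n
  have hsub : {ω | ∃ k ≤ n, c ≤ X k ω} ⊆ S := by
    rintro ω ⟨k, hk, hck⟩
    change (c.toNNReal : ℝ) ≤ _
    rw [Real.coe_toNNReal c hc.le]
    exact hck.trans ((le_posPart _).trans
      (Finset.le_sup' (fun k => X⁺ k ω) (Finset.mem_range_succ_iff.mpr hk)))
  have hpos_eq : X⁺ n =ᵐ[μ] X n := by
    filter_upwards [hnonneg] with ω hω
    exact posPart_eq_self.mpr hω
  have hint : ∫ ω in S, X⁺ n ω ∂μ ≤ ∫ ω, X 0 ω ∂μ := by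
    calc ∫ ω in S, X⁺ n ω ∂μ ≤ ∫ ω, X⁺ n ω ∂μ :=
          setIntegral_le_integral (hX.submartingale.pos.integrable n)
            (Filter.Eventually.of_forall fun ω => posPart_nonneg (X n ω))
      _ = ∫ ω, X n ω ∂μ := integral_congr_ae hpos_eq
      _ = ∫ ω, X 0 ω ∂μ := by
          rw [← integral_condExp (ℱ.le 0), integral_congr_ae (hX.2 0 n (Nat.zero_le n))]
  rw [ENNReal.ofReal_div_of_pos hc, ENNReal.le_div_iff_mul_le (by simp [hc]) (by simp), mul_comm]
  calc ENNReal.ofReal c * μ {ω | ∃ k ≤ n, c ≤ X k ω} ≤ ENNReal.ofReal c * μ S := by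
        gcongr
    _ ≤ ENNReal.ofReal (∫ ω in S, X⁺ n ω ∂μ) := hmax
    _ ≤ ENNReal.ofReal (∫ ω, X 0 ω ∂μ) := ENNReal.ofReal_le_ofReal hint

end Martingale

theorem sum_mul_mem_Icc {ι : Type*} (s : Finset ι) {w x : ι → ℝ} (hw : ∀ i ∈ s, 0 ≤ w i)
    (hw_sum : ∑ i ∈ s, w i = 1) (hx : ∀ i ∈ s, x i ∈ Set.Icc (0 : ℝ) 1) :
    ∑ i ∈ s, w i * x i ∈ Set.Icc (0 : ℝ) 1 := by
  refine ⟨Finset.sum_nonneg fun i hi => mul_nonneg (hw i hi) (hx i hi).1, ?_⟩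
  calc ∑ i ∈ s, w i * x i ≤ ∑ i ∈ s, w i * 1 :=
        Finset.sum_le_sum fun i hi => mul_le_mul_of_nonneg_left (hx i hi).2 (hw i hi)
    _ = 1 := by simpa using hw_sum

theorem measurable_apply_comp_of_countable {ι β : Type*} [MeasurableSpace ι] [Countable ι]
    [MeasurableSingletonClass ι] [MeasurableSpace β] {m : MeasurableSpace Ω} {G : Ω → ι → β}
    {J : Ω → ι} (hG : ∀ i, Measurable fun ω => G ω i) (hJ : Measurable J) :
    Measurable fun ω => G ω (J ω) :=
  (measurable_from_prod_countable_left (f := fun p : Ω × ι => G p.1 p.2) hG).comp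
    (measurable_id.prodMk hJ)

theorem sum_mul_one_add_mul_div_sub {ι : Type*} {R : Finset ι} {q g : ι → ℝ} (L C : ℝ)
    (hq_pos : ∀ i ∈ R, 0 < q i) (hq_sum : ∑ i ∈ R, q i = 1) (hg : ∑ i ∈ R, g i = C) :
    ∑ i ∈ R, q i * (1 + L * (g i / q i - C)) = 1 := by
  have hterm : ∀ i ∈ R, q i * (1 + L * (g i / q i - C)) = (1 - L * C) * q i + L * g i := by
    intro i hi
    field_simp [(hq_pos i hi).ne']
    ring
  rw [Finset.sum_congr rfl hterm, Finset.sum_add_distrib, ← Finset.mul_sum, ← Finset.mul_sum,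
    hq_sum, hg]
  ring

section Sampling

variable {N : ℕ} {π f : Fin N → ℝ} {I : ℕ → Ω → Fin N} {q : ℕ → Ω → Fin N → ℝ}

theorem filt_mono (I : ℕ → Ω → Fin N) {a b : ℕ} (h : a ≤ b) : filt I a ≤ filt I b :=
  biSup_mono fun _ hj =>
    Finset.mem_Icc.mpr ⟨(Finset.mem_Icc.mp hj).1, (Finset.mem_Icc.mp hj).2.trans h⟩

theorem filt_le [m0 : MeasurableSpace Ω] (hI : ∀ t, Measurable (I t)) (t : ℕ) : filt I t ≤ m0 :=
  iSup₂_le fun j _ => (hI j).comap_le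

def samplingFiltration [m0 : MeasurableSpace Ω] (hI : ∀ t, Measurable (I t)) :
    Filtration ℕ m0 :=
  ⟨filt I, fun _ _ => filt_mono I, filt_le hI⟩

theorem measurable_filt {j t : ℕ} (hj : 1 ≤ j) (hjt : j ≤ t) : Measurable[filt I t] (I j) :=
  measurable_iff_comap_le.mpr <|
    le_iSup₂ (f := fun j (_ : j ∈ Finset.Icc 1 t) => MeasurableSpace.comap (I j) ⊤) j
      (Finset.mem_Icc.mpr ⟨hj, hjt⟩)

theorem measurable_muT (m : ℝ) (t : ℕ) : Measurable[filt I (t - 1)] (muT π f I m t) :=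
  measurable_const.sub <| Finset.measurable_sum _ fun _ hj =>
    (measurable_from_top (f := fun i => π i * f i)).comp
      (measurable_filt (Finset.mem_Icc.mp hj).1 (Finset.mem_Icc.mp hj).2)

theorem ne_of_mem_remaining {ω : Ω} {j k : ℕ} (hj : 1 ≤ j) (hjk : j < k)
    (hk : I k ω ∈ remaining I k ω) : I j ω ≠ I k ω := by
  intro h
  simp only [remaining, Finset.mem_sdiff, Finset.mem_image] at hk
  exact hk.2 ⟨j, Finset.mem_Icc.mpr ⟨hj, Nat.le_sub_one_of_lt hjk⟩, h⟩

/-- The sampled indices are distinct, so summing over `N_t` removes exactly the terms already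
drawn from `m*`. -/
theorem sum_remaining_eq_muT {ω : Ω} {t : ℕ}
    (hWoR : ∀ s, 1 ≤ s → s < t → I s ω ∈ remaining I s ω) :
    ∑ i ∈ remaining I t ω, π i * f i = muT π f I (∑ i, π i * f i) t ω := by
  classical
  have hinj : Set.InjOn (fun j => I j ω) (Finset.Icc 1 (t - 1)) := by
    intro j hj k hk hjk
    simp only [Finset.coe_Icc, Set.mem_Icc] at hj hk
    have hlt : ∀ {a b}, 1 ≤ a → b ≤ t - 1 → a < b → I a ω ≠ I b ω := fun ha hb hab =>
      ne_of_mem_remaining ha hab (hWoR _ (ha.trans hab.le) (by omega))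
    rcases lt_trichotomy j k with h | h | h
    · exact absurd hjk (hlt hj.1 hk.2 h)
    · exact h
    · exact absurd hjk.symm (hlt hk.1 hj.2 h)
  rw [remaining, Finset.sum_sdiff_eq_sub (Finset.subset_univ _), Finset.sum_image hinj, muT]

/-- The factor by which the wealth is multiplied at time `t` if index `i` is drawn. -/
noncomputable def betFactor (π f : Fin N → ℝ) (q : ℕ → Ω → Fin N → ℝ) (I : ℕ → Ω → Fin N)
    (lam : ℕ → Ω → ℝ) (m : ℝ) (t : ℕ) (ω : Ω) (i : Fin N) : ℝ :=
  1 + lam t ω * (f i * (π i / q t ω i) - muT π f I m t ω)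

variable {lam : ℕ → Ω → ℝ}

theorem measurable_betFactor {m : ℝ} {t : ℕ}
    (hq : ∀ i, Measurable[filt I (t - 1)] fun ω => q t ω i)
    (hlam : Measurable[filt I (t - 1)] (lam t)) (i : Fin N) :
    Measurable[filt I (t - 1)] fun ω => betFactor π f q I lam m t ω i :=
  measurable_const.add <| hlam.mul <|
    ((hq i).const_div _).const_mul _ |>.sub (measurable_muT m t)

theorem sum_mul_betFactor {ω : Ω} {t : ℕ}
    (hq_pos : ∀ i ∈ remaining I t ω, 0 < q t ω i) (hq_sum : ∑ i ∈ remaining I t ω, q t ω i = 1)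
    (hWoR : ∀ s, 1 ≤ s → s < t → I s ω ∈ remaining I s ω) :
    ∑ i ∈ remaining I t ω, q t ω i * betFactor π f q I lam (∑ i, π i * f i) t ω i = 1 := by
  rw [← sum_mul_one_add_mul_div_sub (g := fun i => π i * f i) (lam t ω) _ hq_pos hq_sum
    (sum_remaining_eq_muT hWoR)]
  refine Finset.sum_congr rfl fun i _ => ?_
  simp only [betFactor]
  ring

variable {m : ℝ} {W : ℕ → Ω → ℝ}

theorem measurable_wealth
    (hq : ∀ t, 1 ≤ t → t ≤ N → ∀ i, Measurable[filt I (t - 1)] fun ω => q t ω i)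
    (hlam : ∀ t, 1 ≤ t → t ≤ N → Measurable[filt I (t - 1)] (lam t)) (hW0 : ∀ ω, W 0 ω = 1)
    (hWrec : ∀ t, 1 ≤ t → t ≤ N → ∀ ω,
      W t ω = W (t - 1) ω * (1 + lam t ω * (Zt π f q I t ω - muT π f I m t ω))) :
    ∀ t ≤ N, Measurable[filt I t] (W t) := by
  intro t
  induction t with
  | zero =>
    intro _
    rw [funext hW0]
    exact measurable_const
  | succ t ih =>
    intro ht
    have h1 : 1 ≤ t + 1 := by omega
    rw [funext (hWrec (t + 1) h1 ht)]
    refine measurable_apply_comp_of_countable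
      (G := fun ω i => W t ω * betFactor π f q I lam m (t + 1) ω i) (fun i => ?_)
      (measurable_filt h1 le_rfl)
    exact ((ih (by omega)).mul (measurable_betFactor (hq _ h1 ht) (hlam _ h1 ht) i)).mono
      (filt_mono I t.le_succ) le_rfl

theorem wealth_nonneg [MeasurableSpace Ω] {μ : Measure Ω}
    (hfac : ∀ t, 1 ≤ t → t ≤ N →
      ∀ᵐ ω ∂μ, 0 ≤ 1 + lam t ω * (Zt π f q I t ω - muT π f I m t ω))
    (hW0 : ∀ ω, W 0 ω = 1)
    (hWrec : ∀ t, 1 ≤ t → t ≤ N → ∀ ω,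
      W t ω = W (t - 1) ω * (1 + lam t ω * (Zt π f q I t ω - muT π f I m t ω))) :
    ∀ t ≤ N, 0 ≤ᵐ[μ] W t := by
  intro t
  induction t with
  | zero => exact fun _ => Filter.Eventually.of_forall fun ω => (hW0 ω).symm ▸ zero_le_one
  | succ t ih =>
    intro ht
    have h1 : 1 ≤ t + 1 := by omega
    filter_upwards [ih (by omega), hfac (t + 1) h1 ht] with ω hW hfac
    rw [hWrec (t + 1) h1 ht ω]
    exact mul_nonneg hW hfac

/-- At `m = m*` the next betting factor has conditional mean one (`sum_mul_betFactor`). -/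
theorem condExp_wealth_succ [MeasurableSpace Ω] {μ : Measure Ω}
    (hq : ∀ t, 1 ≤ t → t ≤ N → ∀ i, Measurable[filt I (t - 1)] fun ω => q t ω i)
    (hlam : ∀ t, 1 ≤ t → t ≤ N → Measurable[filt I (t - 1)] (lam t))
    (hq_pos : ∀ t ω, 1 ≤ t → t ≤ N → ∀ i ∈ remaining I t ω, 0 < q t ω i)
    (hq_sum : ∀ t ω, 1 ≤ t → t ≤ N → ∑ i ∈ remaining I t ω, q t ω i = 1)
    (hWoR : ∀ t ω, 1 ≤ t → t ≤ N → I t ω ∈ remaining I t ω)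
    (hcond : ∀ t, 1 ≤ t → t ≤ N → ∀ G : Ω → Fin N → ℝ,
      (∀ i, StronglyMeasurable[filt I (t - 1)] fun ω => G ω i) →
      μ[(fun ω => G ω (I t ω)) | filt I (t - 1)]
        =ᵐ[μ] fun ω => ∑ i ∈ remaining I t ω, q t ω i * G ω i)
    (hW0 : ∀ ω, W 0 ω = 1)
    (hWrec : ∀ t, 1 ≤ t → t ≤ N → ∀ ω, W t ω = W (t - 1) ω *
      (1 + lam t ω * (Zt π f q I t ω - muT π f I (∑ i, π i * f i) t ω)))
    {t : ℕ} (ht : t < N) :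
    μ[W (t + 1) | filt I t] =ᵐ[μ] W t := by
  have h1 : 1 ≤ t + 1 := by omega
  set G : Ω → Fin N → ℝ :=
    fun ω i => W t ω * betFactor π f q I lam (∑ i, π i * f i) (t + 1) ω i
  have hG : ∀ i, StronglyMeasurable[filt I t] fun ω => G ω i := fun i =>
    ((measurable_wealth hq hlam hW0 hWrec t ht.le).mul
      (measurable_betFactor (hq _ h1 ht) (hlam _ h1 ht) i)).stronglyMeasurable
  have hGI : (fun ω => G ω (I (t + 1) ω)) = W (t + 1) :=
    funext fun ω => (hWrec (t + 1) h1 ht ω).symm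
  have hsum : (fun ω => ∑ i ∈ remaining I (t + 1) ω, q (t + 1) ω i * G ω i) = W t := by
    funext ω
    calc ∑ i ∈ remaining I (t + 1) ω, q (t + 1) ω i * G ω i
        = W t ω * ∑ i ∈ remaining I (t + 1) ω,
            q (t + 1) ω i * betFactor π f q I lam (∑ i, π i * f i) (t + 1) ω i := by
          rw [Finset.mul_sum]
          exact Finset.sum_congr rfl fun i _ => by ring
      _ = W t ω := by
          rw [sum_mul_betFactor (hq_pos _ ω h1 ht) (hq_sum _ ω h1 ht)
            (fun s hs hst => hWoR s ω hs (by omega)), mul_one]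
  have hstep := hcond (t + 1) h1 ht G hG
  rwa [hGI, hsum] at hstep

end Sampling

theorem statement3_general
    [m0 : MeasurableSpace Ω] (μ : Measure Ω) [IsProbabilityMeasure μ]
    {N : ℕ}
    (π f : Fin N → ℝ)
    (hπ : ∀ i, π i ∈ Set.Ioc (0 : ℝ) 1) (hπsum : ∑ i, π i = 1)
    (hf : ∀ i, f i ∈ Set.Icc (0 : ℝ) 1)
    (I : ℕ → Ω → Fin N) (hI : ∀ t, Measurable (I t))
    (q : ℕ → Ω → Fin N → ℝ)
    (hq_meas : ∀ t, 1 ≤ t → t ≤ N → ∀ i,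
      StronglyMeasurable[filt I (t - 1)] fun ω => q t ω i)
    (hq_pos : ∀ t ω, 1 ≤ t → t ≤ N → ∀ i ∈ remaining I t ω, 0 < q t ω i)
    (hq_sum : ∀ t ω, 1 ≤ t → t ≤ N → ∑ i ∈ remaining I t ω, q t ω i = 1)
    (hWoR : ∀ t ω, 1 ≤ t → t ≤ N → I t ω ∈ remaining I t ω)
    (hcond : ∀ t, 1 ≤ t → t ≤ N → ∀ G : Ω → Fin N → ℝ,
      (∀ i, StronglyMeasurable[filt I (t - 1)] fun ω => G ω i) →
      μ[(fun ω => G ω (I t ω)) | filt I (t - 1)]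
        =ᵐ[μ] fun ω => ∑ i ∈ remaining I t ω, q t ω i * G ω i)
    (mstar : ℝ) (hmstar : mstar = ∑ i, π i * f i)
    -- a betting strategy `(λ_t(m))` for each `m ∈ [0,1]`
    (lam : ℝ → ℕ → Ω → ℝ)
    (hlam_meas : ∀ m ∈ Set.Icc (0 : ℝ) 1, ∀ t, 1 ≤ t → t ≤ N →
      StronglyMeasurable[filt I (t - 1)] (lam m t))
    (hfac : ∀ m ∈ Set.Icc (0 : ℝ) 1, ∀ t, 1 ≤ t → t ≤ N →
      ∀ᵐ ω ∂μ, 0 ≤ 1 + lam m t ω * (Zt π f q I t ω - muT π f I m t ω))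
    -- the wealth processes `W_t(m)` for each `m ∈ [0,1]`
    (W : ℝ → ℕ → Ω → ℝ)
    (hW0 : ∀ m ∈ Set.Icc (0 : ℝ) 1, ∀ ω, W m 0 ω = 1)
    (hWrec : ∀ m ∈ Set.Icc (0 : ℝ) 1, ∀ t, 1 ≤ t → t ≤ N → ∀ ω,
      W m t ω = W m (t - 1) ω * (1 + lam m t ω * (Zt π f q I t ω - muT π f I m t ω)))
    (δ : ℝ) (hδ : δ ∈ Set.Ioo (0 : ℝ) 1) :
    μ {ω | ∃ t, 1 ≤ t ∧ t ≤ N ∧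
        mstar ∉ {m : ℝ | m ∈ Set.Icc (0 : ℝ) 1 ∧ W m t ω < 1 / δ}} ≤ ENNReal.ofReal δ := by
  obtain ⟨hδ0, -⟩ := hδ
  have hm : mstar ∈ Set.Icc (0 : ℝ) 1 :=
    hmstar ▸ sum_mul_mem_Icc _ (fun i _ => (hπ i).1.le) hπsum fun i _ => hf i
  have hq : ∀ t, 1 ≤ t → t ≤ N → ∀ i, Measurable[filt I (t - 1)] fun ω => q t ω i :=
    fun t h1 h2 i => (hq_meas t h1 h2 i).measurable
  have hlam : ∀ t, 1 ≤ t → t ≤ N → Measurable[filt I (t - 1)] (lam mstar t) :=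
    fun t h1 h2 => (hlam_meas mstar hm t h1 h2).measurable
  have hW0' := hW0 mstar hm
  have hWrec' := hWrec mstar hm
  have hmart : Martingale (fun n => W mstar (min n N)) (samplingFiltration hI) μ := by
    refine martingale_min_of_condExp_succ
      (fun n hn => (measurable_wealth hq hlam hW0' hWrec' n hn).stronglyMeasurable)
      (by rw [funext hW0']; exact integrable_const 1) (by simp [hW0']) fun n hn => ?_
    subst hmstar
    exact condExp_wealth_succ hq hlam hq_pos hq_sum hWoR hcond hW0' hWrec' hn
  have hville := hmart.measure_exists_le_le N
    (by simpa using wealth_nonneg (hfac mstar hm) hW0' hWrec' N le_rfl) (one_div_pos.mpr hδ0)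
  calc μ {ω | ∃ t, 1 ≤ t ∧ t ≤ N ∧
        mstar ∉ {m : ℝ | m ∈ Set.Icc (0 : ℝ) 1 ∧ W m t ω < 1 / δ}}
      ≤ μ {ω | ∃ k ≤ N, 1 / δ ≤ W mstar (min k N) ω} := by
        refine measure_mono fun ω ⟨t, _, htN, hout⟩ => ⟨t, htN, ?_⟩
        rw [min_eq_left htN]
        exact not_lt.mp fun hlt => hout ⟨hm, hlt⟩
    _ ≤ ENNReal.ofReal ((∫ ω, W mstar (min 0 N) ω ∂μ) / (1 / δ)) := hville
    _ = ENNReal.ofReal δ := by simp [hW0']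

/-- **Theorem 2.1, coverage part.** For any `δ ∈ (0,1)`, any sampling strategy
`(q_t)`, and any family of betting strategies `(λ_t(m))` indexed by `m ∈ [0,1]`, the sets
`C_t = {m ∈ [0,1] : W_t(m) < 1/δ}` form a `(1−δ)`-confidence sequence for `m*`, i.e.
`P(∃ t ∈ {1,…,N} : m* ∉ C_t) ≤ δ`. -/
theorem statement3
    [m0 : MeasurableSpace Ω] (μ : Measure Ω) [IsProbabilityMeasure μ]
    {N : ℕ} (hN : 1 ≤ N)
    (π f : Fin N → ℝ)
    (hπ : ∀ i, π i ∈ Set.Ioc (0 : ℝ) 1) (hπsum : ∑ i, π i = 1)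
    (hf : ∀ i, f i ∈ Set.Icc (0 : ℝ) 1)
    (I : ℕ → Ω → Fin N) (hI : ∀ t, Measurable (I t))
    (q : ℕ → Ω → Fin N → ℝ)
    (hq_meas : ∀ t, 1 ≤ t → t ≤ N → ∀ i,
      StronglyMeasurable[filt I (t - 1)] fun ω => q t ω i)
    (hq_pos : ∀ t ω, 1 ≤ t → t ≤ N → ∀ i ∈ remaining I t ω, 0 < q t ω i)
    (hq_sum : ∀ t ω, 1 ≤ t → t ≤ N → ∑ i ∈ remaining I t ω, q t ω i = 1)
    (hWoR : ∀ t ω, 1 ≤ t → t ≤ N → I t ω ∈ remaining I t ω)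
    (hcond : ∀ t, 1 ≤ t → t ≤ N → ∀ G : Ω → Fin N → ℝ,
      (∀ i, StronglyMeasurable[filt I (t - 1)] fun ω => G ω i) →
      μ[(fun ω => G ω (I t ω)) | filt I (t - 1)]
        =ᵐ[μ] fun ω => ∑ i ∈ remaining I t ω, q t ω i * G ω i)
    (mstar : ℝ) (hmstar : mstar = ∑ i, π i * f i)
    -- a betting strategy `(λ_t(m))` for each `m ∈ [0,1]`
    (lam : ℝ → ℕ → Ω → ℝ)
    (hlam_meas : ∀ m ∈ Set.Icc (0 : ℝ) 1, ∀ t, 1 ≤ t → t ≤ N →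
      StronglyMeasurable[filt I (t - 1)] (lam m t))
    (hfac : ∀ m ∈ Set.Icc (0 : ℝ) 1, ∀ t, 1 ≤ t → t ≤ N →
      ∀ᵐ ω ∂μ, 0 ≤ 1 + lam m t ω * (Zt π f q I t ω - muT π f I m t ω))
    -- the wealth processes `W_t(m)` for each `m ∈ [0,1]`
    (W : ℝ → ℕ → Ω → ℝ)
    (hW0 : ∀ m ∈ Set.Icc (0 : ℝ) 1, ∀ ω, W m 0 ω = 1)
    (hWrec : ∀ m ∈ Set.Icc (0 : ℝ) 1, ∀ t, 1 ≤ t → t ≤ N → ∀ ω,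
      W m t ω = W m (t - 1) ω * (1 + lam m t ω * (Zt π f q I t ω - muT π f I m t ω)))
    (δ : ℝ) (hδ : δ ∈ Set.Ioo (0 : ℝ) 1) :
    μ {ω | ∃ t, 1 ≤ t ∧ t ≤ N ∧
        mstar ∉ {m : ℝ | m ∈ Set.Icc (0 : ℝ) 1 ∧ W m t ω < 1 / δ}} ≤ ENNReal.ofReal δ :=
  statement3_general (m0 := m0) μ π f hπ hπsum hf I hI q hq_meas hq_pos hq_sum hWoR hcond mstar
    hmstar lam hlam_meas hfac W hW0 hWrec δ hδ

end RLFA
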